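/- For α with 1 < α < 2, the limit h(x) := lim_{q→0+} (u_q(0) − u_q(x)) exists for every x ∈ ℝ and equals (1/π) ∫₀^∞ (1 − cos(xλ))/λ^α dλ, where u_q(x) = (1/π) ∫₀^∞ cos(xλ)/(q + λ^α) dλ. -/

import Mathlib

/-!
Since `cos 0 = 1`, for `q > 0` the difference `u_q(0) - u_q(x)` equals
`(1/π) ∫₀^∞ (1 - cos(xλ))/(q + λ^α) dλ`. The integrand is dominated by `(1 - cos(xλ))/λ^α`,
which is integrable because `1 - cos(xλ) ≤ x²λ²/2` near `0` (so `α < 3` suffices there) and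
`1 - cos(xλ) ≤ 2` at infinity (so `α > 1` suffices there); dominated convergence as `q → 0+`
gives the limit.
-/

open MeasureTheory Filter Set Real Topology

section

variable {α : ℝ}

lemma integrableOn_Ioc_one_sub_cos_mul_div_rpow (x : ℝ) (hα : α < 3) :
    IntegrableOn (fun l => (1 - cos (x * l)) / l ^ α) (Ioc 0 1) := by
  have hbound : IntegrableOn (fun l : ℝ => x ^ 2 / 2 * l ^ (2 - α)) (Ioc 0 1) := by
    refine Integrable.const_mul ?_ _
    exact (intervalIntegrable_iff_integrableOn_Ioc_of_le zero_le_one).mp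
      (intervalIntegral.intervalIntegrable_rpow' (by linarith))
  refine hbound.mono' (by fun_prop : Measurable _).aestronglyMeasurable ?_
  filter_upwards [ae_restrict_mem measurableSet_Ioc] with l hl
  have hl0 : (0 : ℝ) < l := hl.1
  have hlα : 0 < l ^ α := rpow_pos_of_pos hl0 α
  rw [norm_of_nonneg (div_nonneg (sub_nonneg.mpr (cos_le_one _)) hlα.le)]
  calc (1 - cos (x * l)) / l ^ α ≤ (x * l) ^ 2 / 2 / l ^ α := by
        gcongr; linarith [one_sub_sq_div_two_le_cos (x := x * l)]
    _ = x ^ 2 / 2 * l ^ (2 - α) := by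
        rw [rpow_sub hl0, rpow_two]; ring

lemma integrableOn_Ioi_one_sub_cos_mul_div_rpow (x : ℝ) (hα : 1 < α) :
    IntegrableOn (fun l => (1 - cos (x * l)) / l ^ α) (Ioi 1) := by
  have hbound : IntegrableOn (fun l : ℝ => 2 * l ^ (-α)) (Ioi 1) :=
    (integrableOn_Ioi_rpow_of_lt (by linarith) one_pos).const_mul 2
  refine hbound.mono' (by fun_prop : Measurable _).aestronglyMeasurable ?_
  filter_upwards [ae_restrict_mem measurableSet_Ioi] with l hl
  have hl0 : (0 : ℝ) < l := one_pos.trans hl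
  have hlα : 0 < l ^ α := rpow_pos_of_pos hl0 α
  rw [norm_of_nonneg (div_nonneg (sub_nonneg.mpr (cos_le_one _)) hlα.le), rpow_neg hl0.le,
    ← div_eq_mul_inv]
  gcongr
  linarith [neg_one_le_cos (x * l)]

lemma integrableOn_one_sub_cos_mul_div_rpow (x : ℝ) (hα : 1 < α) (hα3 : α < 3) :
    IntegrableOn (fun l => (1 - cos (x * l)) / l ^ α) (Ioi 0) := by
  rw [← Ioc_union_Ioi_eq_Ioi zero_le_one]
  exact (integrableOn_Ioc_one_sub_cos_mul_div_rpow x hα3).union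
    (integrableOn_Ioi_one_sub_cos_mul_div_rpow x hα)

lemma integrableOn_inv_add_rpow (hα : 1 < α) {q : ℝ} (hq : 0 < q) :
    IntegrableOn (fun l => (q + l ^ α)⁻¹) (Ioi 0) := by
  rw [← Ioc_union_Ioi_eq_Ioi zero_le_one]
  refine IntegrableOn.union ?_ ?_
  · refine (integrableOn_const (C := q⁻¹) measure_Ioc_lt_top.ne).mono'
      (by fun_prop : Measurable _).aestronglyMeasurable ?_
    filter_upwards [ae_restrict_mem measurableSet_Ioc] with l hl
    have hlα : 0 < l ^ α := rpow_pos_of_pos hl.1 α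
    rw [norm_of_nonneg (by positivity)]
    gcongr
    linarith
  · refine (integrableOn_Ioi_rpow_of_lt (by linarith : -α < -1) one_pos).mono'
      (by fun_prop : Measurable _).aestronglyMeasurable ?_
    filter_upwards [ae_restrict_mem measurableSet_Ioi] with l hl
    have hlα : 0 < l ^ α := rpow_pos_of_pos (one_pos.trans hl) α
    rw [norm_of_nonneg (by positivity), rpow_neg (one_pos.trans hl).le]
    gcongr
    linarith

lemma integrableOn_cos_mul_div_add_rpow (hα : 1 < α) {q : ℝ} (hq : 0 < q) (c : ℝ) :
    IntegrableOn (fun l => cos (c * l) / (q + l ^ α)) (Ioi 0) := by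
  simp_rw [div_eq_mul_inv]
  exact (integrableOn_inv_add_rpow hα hq).bdd_mul (c := 1) (by fun_prop)
    (Eventually.of_forall fun l => by simpa using abs_cos_le_one (c * l))

theorem tendsto_setIntegral_div_add_rpow {f : ℝ → ℝ} (hf : Measurable f)
    (hint : IntegrableOn (fun l => f l / l ^ α) (Ioi 0)) :
    Tendsto (fun q => ∫ l in Ioi 0, f l / (q + l ^ α)) (𝓝[>] 0)
      (𝓝 (∫ l in Ioi 0, f l / l ^ α)) := by
  refine tendsto_integral_filter_of_dominated_convergence (fun l => ‖f l / l ^ α‖)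
    (Eventually.of_forall fun q => (by fun_prop : Measurable _).aestronglyMeasurable)
    ?_ hint.norm ?_
  · filter_upwards [self_mem_nhdsWithin] with q (hq : 0 < q)
    filter_upwards [ae_restrict_mem measurableSet_Ioi] with l (hl : 0 < l)
    have hlα : 0 < l ^ α := rpow_pos_of_pos hl α
    rw [norm_div, norm_div, norm_of_nonneg (by positivity : 0 ≤ q + l ^ α),
      norm_of_nonneg hlα.le]
    gcongr
    linarith
  · filter_upwards [ae_restrict_mem measurableSet_Ioi] with l (hl : 0 < l)
    have hden : Tendsto (fun q : ℝ => q + l ^ α) (𝓝[>] 0) (𝓝 (l ^ α)) :=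
      ((continuous_add_const _).tendsto' 0 _ (zero_add _)).mono_left nhdsWithin_le_nhds
    exact tendsto_const_nhds.div hden (rpow_pos_of_pos hl α).ne'

end

/-- For `1 < α < 2`, the limit `h(x) = lim_{q→0+} (u_q(0) - u_q(x))` exists for every
`x ∈ ℝ` and equals `(1/π) ∫₀^∞ (1 - cos(xλ))/λ^α dλ`, where
`u_q(x) = (1/π) ∫₀^∞ cos(xλ)/(q+λ^α) dλ`. -/
theorem limit_resolvent_difference
    (α : ℝ) (hα : 1 < α) (hα2 : α < 2) (x : ℝ) :
    Tendsto (fun q : ℝ =>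
        ((1 / Real.pi) * ∫ l in Set.Ioi (0 : ℝ), Real.cos (0 * l) / (q + l ^ α))
          - (1 / Real.pi) * ∫ l in Set.Ioi (0 : ℝ), Real.cos (x * l) / (q + l ^ α))
      (nhdsWithin 0 (Set.Ioi 0))
      (nhds ((1 / Real.pi) * ∫ l in Set.Ioi (0 : ℝ), (1 - Real.cos (x * l)) / l ^ α)) := by
  have hdiff : ∀ᶠ q in 𝓝[>] (0 : ℝ),
      (1 / π) * ∫ l in Ioi 0, (1 - cos (x * l)) / (q + l ^ α) =
        (1 / π) * (∫ l in Ioi 0, cos (0 * l) / (q + l ^ α))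
          - (1 / π) * ∫ l in Ioi 0, cos (x * l) / (q + l ^ α) := by
    filter_upwards [self_mem_nhdsWithin] with q (hq : 0 < q)
    rw [← mul_sub, ← integral_sub (integrableOn_cos_mul_div_add_rpow hα hq 0)
      (integrableOn_cos_mul_div_add_rpow hα hq x)]
    simp only [zero_mul, cos_zero, sub_div]
  have hlimit := tendsto_setIntegral_div_add_rpow (by fun_prop)
    (integrableOn_one_sub_cos_mul_div_rpow x hα (by linarith))
  exact (hlimit.const_mul (1 / π)).congr' hdiff
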